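/- arXiv:1006.1428 — 4 statements merged into one kernel-verified Lean document; each statement's English description precedes it below -/
import Mathlib

section
/- Let A and B be finite sets, C a set, and T = (Q, δ) a Turing automaton of sort (A ⊕ A) ⊕ (B ⊕ B) ⊕ C. Let ρ be the bijection from (A ⊕ A) ⊕ (B ⊕ B) ⊕ C to (B ⊕ B) ⊕ (A ⊕ A) ⊕ C that interchanges the A ⊕ A block with the B ⊕ B block and fixes C. Then κ_B(κ_A T) = κ_A(κ_B(T · ρ)) as Turing automata of sort C: both have state set Q and their transition relations coincide. (Trace swapping, axiom I9, for Turing automata.) -/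
/-- The transition relation of a Turing automaton of sort `X`: a relation
`δ ⊆ (Q × X_*)²`, where `X_* = X ⊕ {*}` is modeled as `Option X`, with `none` the anchor. -/
def TRel (Q X : Type*) : Type _ := (Q × Option X) → (Q × Option X) → Prop

/-- Relational composition (product of the semiring of binary relations on `Q`). -/
def rcomp {Q : Type*} (r s : Q → Q → Prop) : Q → Q → Prop := fun a c => ∃ b, r a b ∧ s b c

/-- Union of relations (sum of the semiring of binary relations on `Q`). -/
def runion {Q : Type*} (r s : Q → Q → Prop) : Q → Q → Prop := fun a b => r a b ∨ s a b

/-- 2×2 matrices of binary relations on `Q`. -/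
def Mat2 (Q : Type*) : Type _ := Fin 2 → Fin 2 → (Q → Q → Prop)

/-- The transposition of indices used to interchange the two rows of a matrix. -/
def swap2 : Fin 2 → Fin 2 := fun i => if i = 0 then 1 else 0

/-- Alternating matrix product `M ⊙ N := M · (σN)`, where `σN` interchanges the rows of `N`. -/
def altMul {Q : Type*} (M N : Mat2 Q) : Mat2 Q :=
  fun i j => runion (rcomp (M i 0) (N (swap2 0) j)) (rcomp (M i 1) (N (swap2 1) j))

/-- `U⁰ := σI₂`: identity relations off the diagonal, empty relations on the diagonal. -/
def altOne {Q : Type*} : Mat2 Q := fun i j => if i = j then (fun _ _ => False) else Eq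

/-- Alternating matrix powers: `U⁰ = σI₂`, `U^(n+1) = Uⁿ ⊙ U`. -/
def altPow {Q : Type*} (U : Mat2 Q) : ℕ → Mat2 Q
  | 0 => altOne
  | n + 1 => altMul (altPow U n) U

/-- Alternating product of a row vector with a matrix: `u ⊙ M := u · (σM)`. -/
def altRowMul {Q : Type*} (u : Fin 2 → Q → Q → Prop) (M : Mat2 Q) : Fin 2 → Q → Q → Prop :=
  fun j => runion (rcomp (u 0) (M (swap2 0) j)) (rcomp (u 1) (M (swap2 1) j))

/-- Alternating product of a row vector with a column vector: `u ⊙ v := u · (σv)`. -/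
def altRowCol {Q : Type*} (u v : Fin 2 → Q → Q → Prop) : Q → Q → Prop :=
  runion (rcomp (u 0) (v (swap2 0))) (rcomp (u 1) (v (swap2 1)))

/-- A family `λ_{x,y}` of binary relations on `Q` indexed by pairs of interfaces. -/
def LamFamily (Q X : Type*) : Type _ := Option X → Option X → (Q → Q → Prop)

/-- The base case of the Kleene elimination: `λ^∅_{x,y} = {(q,r) | ((q,x),(r,y)) ∈ δ}`. -/
def lamInit {Q A B : Type*} (δ : TRel Q (A ⊕ A ⊕ B)) : LamFamily Q (A ⊕ A ⊕ B) :=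
  fun x y q r => δ (q, x) (r, y)

/-- One Kleene elimination step at `z ∈ A`:
`λ^(C∪{z})_{x,y} := λ^C_{x,y} ∪ ⋃_{n≥0} u ⊙ Uⁿ ⊙ v` with
`u = (λ^C_{x,⟨z,1⟩}, λ^C_{x,⟨z,2⟩})`, `v = (λ^C_{⟨z,1⟩,y}; λ^C_{⟨z,2⟩,y})` and
`U = (λ^C_{⟨z,i⟩,⟨z,j⟩})_{i,j}`. -/
def elimStep {Q A B : Type*} (lam : LamFamily Q (A ⊕ A ⊕ B)) (z : A) :
    LamFamily Q (A ⊕ A ⊕ B) :=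
  fun x y =>
    let p : Fin 2 → Option (A ⊕ A ⊕ B) := ![some (Sum.inl z), some (Sum.inr (Sum.inl z))]
    let u : Fin 2 → Q → Q → Prop := fun i => lam x (p i)
    let U : Mat2 Q := fun i j => lam (p i) (p j)
    let v : Fin 2 → Q → Q → Prop := fun i => lam (p i) y
    runion (lam x y) (fun q r => ∃ n, altRowCol (altRowMul u (altPow U n)) v q r)

/-- Kleene elimination along a list of elements of `A`. -/
def lamList {Q A B : Type*} (δ : TRel Q (A ⊕ A ⊕ B)) : List A → LamFamily Q (A ⊕ A ⊕ B)
  | [] => lamInit δ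
  | z :: L => elimStep (lamList δ L) z

/-- The trace `κ_A T` of a Turing automaton of sort `A ⊕ A ⊕ B` (`A` finite): its
transitions are `((q,b),(r,b'))` iff `(q,r) ∈ λ^A_{b,b'}`. -/
def kappa {Q A B : Type*} [Fintype A] (δ : TRel Q (A ⊕ A ⊕ B)) : TRel Q B :=
  fun a b =>
    lamList δ Finset.univ.toList (a.2.map (fun x => Sum.inr (Sum.inr x)))
      (b.2.map (fun x => Sum.inr (Sum.inr x))) a.1 b.1

/-- The relabeling `T · ρ` of a Turing automaton along a bijection `ρ : X ≃ Y`: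
`((q, ρ_* x),(r, ρ_* y))` is a transition iff `((q,x),(r,y))` is, where `ρ_*(*) = *`. -/
def relabel {Q X Y : Type*} (ρ : X ≃ Y) (δ : TRel Q X) : TRel Q Y :=
  fun a b => δ (a.1, a.2.map ρ.symm) (b.1, b.2.map ρ.symm)

/-- The sum `T ⊕ T'` of Turing automata of sorts `X` and `Y`: states `Q × Q'`, and a
transition happens in one component while the other state stays put; anchors identified. -/
def autSum {Q Q' X Y : Type*} (δ : TRel Q X) (δ' : TRel Q' Y) : TRel (Q × Q') (X ⊕ Y) :=
  fun a b =>
    (∃ u v : Option X, a.2 = u.map Sum.inl ∧ b.2 = v.map Sum.inl ∧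
      a.1.2 = b.1.2 ∧ δ (a.1.1, u) (b.1.1, v)) ∨
    (∃ u v : Option Y, a.2 = u.map Sum.inr ∧ b.2 = v.map Sum.inr ∧
      a.1.1 = b.1.1 ∧ δ' (a.1.2, u) (b.1.2, v))

/-- The identity Turing automaton `1_A` of sort `A ⊕ A`: a single state, with transitions
from `⟨a,1⟩` to `⟨a,2⟩` and back for every `a ∈ A`. -/
def idAut (A : Type*) : TRel PUnit (A ⊕ A) :=
  fun a b =>
    (∃ x : A, a.2 = some (Sum.inl x) ∧ b.2 = some (Sum.inr x)) ∨
    (∃ x : A, a.2 = some (Sum.inr x) ∧ b.2 = some (Sum.inl x))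

/-- The permutation `c_{A,B⊕B} ⊗ 1_C` rearranging `(A ⊕ B) ⊕ (B ⊕ C)` into
`B ⊕ B ⊕ (A ⊕ C)`, used to define the derived composition. -/
def compPerm (A B C : Type*) : (A ⊕ B) ⊕ (B ⊕ C) ≃ B ⊕ B ⊕ (A ⊕ C) where
  toFun x := match x with
    | .inl (.inl a) => .inr (.inr (.inl a))
    | .inl (.inr b) => .inl b
    | .inr (.inl b) => .inr (.inl b)
    | .inr (.inr c) => .inr (.inr (.inr c))
  invFun y := match y with
    | .inl b => .inl (.inr b)
    | .inr (.inl b) => .inr (.inl b)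
    | .inr (.inr (.inl a)) => .inl (.inl a)
    | .inr (.inr (.inr c)) => .inr (.inr c)
  left_inv x := by rcases x with (a | b) | (b | c) <;> rfl
  right_inv y := by rcases y with b | (b | (a | c)) <;> rfl

/-- The derived composition `T ∘ T' := κ_B((T ⊕ T') · (c_{A,B⊕B} ⊗ 1_C))` of Turing
automata of sorts `A ⊕ B` and `B ⊕ C` (`B` finite). -/
def compAut {Q Q' A B C : Type*} [Fintype B]
    (δ : TRel Q (A ⊕ B)) (δ' : TRel Q' (B ⊕ C)) : TRel (Q × Q') (A ⊕ C) :=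
  kappa (relabel (compPerm A B C) (autSum δ δ'))

/-- The block-swap permutation `A ⊕ A ⊕ B ⊕ B ⊕ C ≃ B ⊕ B ⊕ A ⊕ A ⊕ C` interchanging
the `A ⊕ A` block with the `B ⊕ B` block and fixing `C`. -/
def blockSwap (A B C : Type*) : A ⊕ A ⊕ B ⊕ B ⊕ C ≃ B ⊕ B ⊕ A ⊕ A ⊕ C where
  toFun x := match x with
    | .inl a => .inr (.inr (.inl a))
    | .inr (.inl a) => .inr (.inr (.inr (.inl a)))
    | .inr (.inr (.inl b)) => .inl b
    | .inr (.inr (.inr (.inl b))) => .inr (.inl b)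
    | .inr (.inr (.inr (.inr c))) => .inr (.inr (.inr (.inr c)))
  invFun y := match y with
    | .inl b => .inr (.inr (.inl b))
    | .inr (.inl b) => .inr (.inr (.inr (.inl b)))
    | .inr (.inr (.inl a)) => .inl a
    | .inr (.inr (.inr (.inl a))) => .inr (.inl a)
    | .inr (.inr (.inr (.inr c))) => .inr (.inr (.inr (.inr c)))
  left_inv x := by rcases x with a | (a | (b | (b | c))) <;> rfl
  right_inv y := by rcases y with b | (b | (a | (a | c))) <;> rfl

/-!
The trace is a reachability relation. By induction on `C`, `λ^C_{x,y}` relates `q` to `r` exactly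
when `T` can run from `(q, x)` to `(r, y)` through a chain of transitions of `δ` in which, between
consecutive transitions, control leaving at `⟨z,1⟩` may re-enter at `⟨z,2⟩` (or vice versa) for
some `z ∈ C`; the alternating powers `Uⁿ` enumerate exactly the chains with `n + 1` such jumps
through the wire just eliminated. Iterating, `κ_B (κ_A T)` is reachability in `T` with jumps
through both the `A`-wires and the `B`-wires. This description is symmetric in the two blocks,
and relabelling by `ρ` only renames the wires.
-/

/-- Runs through the segments `lam x y` joined by jumps `w ↝ w'` allowed by `S`. -/
inductive JumpPath {Q X : Type*} (lam : LamFamily Q X) (S : Option X → Option X → Prop) :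
    Option X → Option X → Q → Q → Prop
  | single {x y q r} : lam x y q r → JumpPath lam S x y q r
  | snoc {x w w' y q q' r} : JumpPath lam S x w q q' → S w w' → lam w' y q' r →
      JumpPath lam S x y q r

namespace JumpPath

variable {Q X Y : Type*} {lam : LamFamily Q X} {S S' : Option X → Option X → Prop}
  {x y : Option X} {q r : Q}

theorem mono (hS : S ≤ S') (h : JumpPath lam S x y q r) : JumpPath lam S' x y q r := by
  induction h with
  | single h => exact single h
  | snoc _ hs h ih => exact snoc ih (hS _ _ hs) h

theorem append {w w' : Option X} {q' : Q} (h₁ : JumpPath lam S x w q q') (hs : S w w')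
    (h₂ : JumpPath lam S w' y q' r) : JumpPath lam S x y q r := by
  induction h₂ with
  | single h => exact snoc h₁ hs h
  | snoc _ hs' h ih => exact snoc (ih h₁) hs' h

theorem snoc_last {w w' : Option X} {q' : Q} (h : JumpPath (JumpPath lam S) S' x w q q')
    (hs : S w w') (hl : lam w' y q' r) : JumpPath (JumpPath lam S) S' x y q r := by
  cases h with
  | single h => exact single (snoc h hs hl)
  | snoc h hs' h' => exact snoc h hs' (snoc h' hs hl)

theorem flatten_iff :
    JumpPath (JumpPath lam S) S' x y q r ↔ JumpPath lam (S ⊔ S') x y q r := by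
  constructor
  · intro h
    induction h with
    | single h => exact h.mono le_sup_left
    | snoc _ hs h ih => exact ih.append (Or.inr hs) (h.mono le_sup_left)
  · intro h
    induction h with
    | single h => exact single (single h)
    | snoc _ hs h ih =>
      rcases hs with hs | hs
      · exact ih.snoc_last hs h
      · exact snoc ih hs (single h)

theorem iff_of_eq_bot (hS : S = ⊥) : JumpPath lam S x y q r ↔ lam x y q r := by
  subst hS
  refine ⟨fun h => ?_, single⟩
  cases h with
  | single h => exact h
  | snoc _ hs _ => exact hs.elim

theorem map_iff (m : Option X → Option Y) (F : LamFamily Q Y) :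
    JumpPath (fun a b => F (m a) (m b)) S x y q r ↔
      JumpPath F (Relation.Map S m m) (m x) (m y) q r := by
  constructor
  · intro h
    induction h with
    | single h => exact single h
    | snoc _ hs h ih => exact snoc ih ⟨_, _, hs, rfl, rfl⟩ h
  · suffices ∀ {v}, JumpPath F (Relation.Map S m m) (m x) v q r →
        ∀ y, v = m y → JumpPath (fun a b => F (m a) (m b)) S x y q r from
      fun h => this h y rfl
    intro v h
    induction h with
    | single h => rintro y rfl; exact single h
    | snoc _ hs h ih =>
      obtain ⟨a, b, hab, rfl, rfl⟩ := hs
      rintro y rfl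
      exact snoc (ih a rfl) hab h

end JumpPath

section PortJump

variable {ι X Y : Type*}

/-- Jumps between the two ends `f i` and `g i` of the feedback wires `i ∈ s`. -/
def portJump (s : Set ι) (f g : ι → X) : Option X → Option X → Prop :=
  fun w w' => ∃ i ∈ s, (w = some (f i) ∧ w' = some (g i)) ∨ (w = some (g i) ∧ w' = some (f i))

theorem portJump_empty (f g : ι → X) : portJump ∅ f g = ⊥ := by
  ext w w'
  simp [portJump]

theorem portJump_union (s t : Set ι) (f g : ι → X) :
    portJump s f g ⊔ portJump t f g = portJump (s ∪ t) f g := by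
  ext w w'
  simp only [portJump, Pi.sup_apply, Set.mem_union, sup_Prop_eq]
  grind

theorem map_portJump (s : Set ι) (f g : ι → X) (e : X → Y) :
    Relation.Map (portJump s f g) (Option.map e) (Option.map e) = portJump s (e ∘ f) (e ∘ g) := by
  ext w w'
  constructor
  · rintro ⟨a, b, ⟨i, hi, ⟨rfl, rfl⟩ | ⟨rfl, rfl⟩⟩, rfl, rfl⟩
    exacts [⟨i, hi, .inl ⟨rfl, rfl⟩⟩, ⟨i, hi, .inr ⟨rfl, rfl⟩⟩]
  · rintro ⟨i, hi, ⟨rfl, rfl⟩ | ⟨rfl, rfl⟩⟩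
    exacts [⟨_, _, ⟨i, hi, .inl ⟨rfl, rfl⟩⟩, rfl, rfl⟩, ⟨_, _, ⟨i, hi, .inr ⟨rfl, rfl⟩⟩, rfl, rfl⟩]

end PortJump

theorem Relation.map_sup {α β γ δ : Type*} (r s : α → β → Prop) (f : α → γ) (g : β → δ) :
    Relation.Map (r ⊔ s) f g = Relation.Map r f g ⊔ Relation.Map s f g := by
  ext c d
  simp only [Relation.Map, Pi.sup_apply, sup_Prop_eq]
  grind

section AltPow

variable {Q : Type*} (u : Fin 2 → Q → Q → Prop) (U : Mat2 Q)

theorem altRowMul_altPow_zero (j : Fin 2) (q r : Q) : altRowMul u (altPow U 0) j q r ↔ u j q r := by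
  fin_cases j <;> simp [altRowMul, altPow, altOne, swap2, rcomp, runion]

theorem altRowMul_altPow_succ (n : ℕ) (j : Fin 2) (q r : Q) :
    altRowMul u (altPow U (n + 1)) j q r ↔
      ∃ k q', altRowMul u (altPow U n) k q q' ∧ U (swap2 k) j q' r := by
  simp only [altPow, altRowMul, altMul, runion, rcomp, Fin.exists_fin_two]
  grind

end AltPow

section ElimStep

variable {Q A B : Type*} (lam : LamFamily Q (A ⊕ A ⊕ B)) (z : A)

/-- The vector `p = (⟨z,1⟩, ⟨z,2⟩)` of `elimStep`. -/
def wireEnds (z : A) : Fin 2 → Option (A ⊕ A ⊕ B) :=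
  ![some (Sum.inl z), some (Sum.inr (Sum.inl z))]

abbrev wireJump (s : Set A) : Option (A ⊕ A ⊕ B) → Option (A ⊕ A ⊕ B) → Prop :=
  portJump s Sum.inl (Sum.inr ∘ Sum.inl)

theorem wireJump_singleton_iff {w w' : Option (A ⊕ A ⊕ B)} :
    wireJump {z} w w' ↔ ∃ k, w = wireEnds z k ∧ w' = wireEnds z (swap2 k) := by
  simp [portJump, wireEnds, swap2, Fin.exists_fin_two]

theorem jumpPath_of_altRowMul {x : Option (A ⊕ A ⊕ B)} {q : Q} (n : ℕ) :
    ∀ {k q'}, altRowMul (fun i => lam x (wireEnds z i))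
        (altPow (fun i j => lam (wireEnds z i) (wireEnds z j)) n) k q q' →
      JumpPath lam (wireJump {z}) x (wireEnds z k) q q' := by
  induction n with
  | zero =>
    intro k q' h
    exact .single ((altRowMul_altPow_zero _ _ _ _ _).1 h)
  | succ n ih =>
    intro k q' h
    obtain ⟨m, q'', h, hU⟩ := (altRowMul_altPow_succ _ _ _ _ _ _).1 h
    exact .snoc (ih h) ((wireJump_singleton_iff z).2 ⟨m, rfl, rfl⟩) hU

theorem altRowMul_of_jumpPath {x y : Option (A ⊕ A ⊕ B)} {q r : Q}
    (h : JumpPath lam (wireJump {z}) x y q r) :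
    lam x y q r ∨ ∃ n k q', altRowMul (fun i => lam x (wireEnds z i))
        (altPow (fun i j => lam (wireEnds z i) (wireEnds z j)) n) k q q' ∧
      lam (wireEnds z (swap2 k)) y q' r := by
  induction h with
  | single h => exact .inl h
  | snoc _ hs hl ih =>
    obtain ⟨k, rfl, rfl⟩ := (wireJump_singleton_iff z).1 hs
    refine .inr ?_
    rcases ih with h | ⟨n, m, q', h, hU⟩
    · exact ⟨0, k, _, (altRowMul_altPow_zero _ _ _ _ _).2 h, hl⟩
    · exact ⟨n + 1, k, _, (altRowMul_altPow_succ _ _ _ _ _ _).2 ⟨m, q', h, hU⟩, hl⟩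

theorem elimStep_iff {x y : Option (A ⊕ A ⊕ B)} {q r : Q} :
    elimStep lam z x y q r ↔ JumpPath lam (wireJump {z}) x y q r := by
  constructor
  · rintro (h | ⟨n, ⟨q', h, hl⟩ | ⟨q', h, hl⟩⟩)
    · exact .single h
    · exact .snoc (jumpPath_of_altRowMul lam z n h) ((wireJump_singleton_iff z).2 ⟨0, rfl, rfl⟩) hl
    · exact .snoc (jumpPath_of_altRowMul lam z n h) ((wireJump_singleton_iff z).2 ⟨1, rfl, rfl⟩) hl
  · intro h
    rcases altRowMul_of_jumpPath lam z h with h | ⟨n, k, q', h, hl⟩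
    · exact .inl h
    · refine .inr ⟨n, ?_⟩
      fin_cases k
      exacts [.inl ⟨q', h, hl⟩, .inr ⟨q', h, hl⟩]

end ElimStep

section Kappa

variable {Q A B : Type*}

theorem lamList_eq (δ : TRel Q (A ⊕ A ⊕ B)) (L : List A) :
    lamList δ L = JumpPath (lamInit δ) (wireJump {z | z ∈ L}) := by
  induction L with
  | nil =>
    funext x y q r
    exact propext (JumpPath.iff_of_eq_bot (by simpa using portJump_empty _ _)).symm
  | cons z L ih =>
    have hjump : wireJump {z | z ∈ L} ⊔ wireJump {z} = wireJump (B := B) {w | w ∈ z :: L} := by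
      rw [portJump_union]
      congr 1
      ext w
      simp
    funext x y q r
    rw [lamList, ih, ← hjump]
    exact propext ((elimStep_iff _ z).trans (JumpPath.flatten_iff (lam := lamInit δ)))

theorem kappa_iff [Fintype A] (δ : TRel Q (A ⊕ A ⊕ B)) (a b : Q × Option B) :
    kappa δ a b ↔ JumpPath (lamInit δ) (wireJump Set.univ)
      (a.2.map (Sum.inr ∘ Sum.inr)) (b.2.map (Sum.inr ∘ Sum.inr)) a.1 b.1 := by
  rw [kappa, lamList_eq]
  simp only [Finset.mem_toList, Finset.mem_univ, Set.ofPred_true]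
  rfl

end Kappa

theorem kappa_kappa_iff {Q A B C : Type*} [Fintype A] [Fintype B]
    (δ : TRel Q (A ⊕ A ⊕ B ⊕ B ⊕ C)) (a b : Q × Option C) :
    kappa (kappa δ) a b ↔ JumpPath (lamInit δ)
      (wireJump (B := B ⊕ B ⊕ C) Set.univ ⊔
        portJump Set.univ (Sum.inr ∘ Sum.inr ∘ Sum.inl) (Sum.inr ∘ Sum.inr ∘ Sum.inr ∘ Sum.inl))
      (a.2.map (Sum.inr ∘ Sum.inr ∘ Sum.inr ∘ Sum.inr))
      (b.2.map (Sum.inr ∘ Sum.inr ∘ Sum.inr ∘ Sum.inr)) a.1 b.1 := by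
  have hinner : lamInit (kappa δ) = fun x y => JumpPath (lamInit δ) (wireJump Set.univ)
      (x.map (Sum.inr ∘ Sum.inr)) (y.map (Sum.inr ∘ Sum.inr)) := by
    funext x y q r
    exact propext (kappa_iff δ (q, x) (r, y))
  rw [kappa_iff, hinner]
  refine (JumpPath.map_iff (Option.map (Sum.inr ∘ Sum.inr)) _).trans ?_
  refine JumpPath.flatten_iff.trans ?_
  rw [map_portJump, Option.map_map, Option.map_map]
  rfl

theorem trace_swapping_general {Q A B C : Type*} [Fintype A] [Fintype B]
    (δ : TRel Q (A ⊕ A ⊕ B ⊕ B ⊕ C)) :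
    kappa (kappa δ) = kappa (kappa (relabel (blockSwap A B C) δ)) := by
  funext a b
  refine propext ((kappa_kappa_iff δ a b).trans (Iff.symm ?_))
  refine (kappa_kappa_iff _ a b).trans ?_
  refine (JumpPath.map_iff (Option.map (blockSwap A B C).symm) (lamInit δ)).trans ?_
  -- `ρ⁻¹` sends the `B`-wires, `A`-wires and `C`-interfaces of `T · ρ` to those of `T`.
  rw [Relation.map_sup, map_portJump, map_portJump, Option.map_map, Option.map_map, sup_comm]
  rfl

/-- Trace swapping (axiom I9) for Turing automata: for a Turing automaton `T` of sort
`(A ⊕ A) ⊕ (B ⊕ B) ⊕ C`, `κ_B(κ_A T) = κ_A(κ_B(T · ρ))`, where `ρ` interchanges the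
`A ⊕ A` block with the `B ⊕ B` block; both sides have state set `Q` and their transition
relations coincide. -/
theorem trace_swapping {Q A B C : Type*} [Nonempty Q] [Fintype A] [Fintype B]
    (δ : TRel Q (A ⊕ A ⊕ B ⊕ B ⊕ C)) :
    kappa (kappa δ) = kappa (kappa (relabel (blockSwap A B C) δ)) :=
  trace_swapping_general δ
end

section
/- Let A be a finite set, B and C sets, T = (Q, δ) a Turing automaton of sort A ⊕ A ⊕ B, and T' = (Q', δ') a Turing automaton of sort C. Then κ_A(T ⊕ T') = (κ_A T) ⊕ T' as Turing automata of sort B ⊕ C: both have state set Q × Q' and their transition relations coincide. (Superposing, axiom I8, for Turing automata.) -/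
/-- The canonical associativity bijection `(A ⊕ A ⊕ B) ⊕ C ≃ A ⊕ A ⊕ (B ⊕ C)`. -/
def assocPerm (A B C : Type*) : (A ⊕ A ⊕ B) ⊕ C ≃ A ⊕ A ⊕ (B ⊕ C) where
  toFun x := match x with
    | .inl (.inl a) => .inl a
    | .inl (.inr (.inl a)) => .inr (.inl a)
    | .inl (.inr (.inr b)) => .inr (.inr (.inl b))
    | .inr c => .inr (.inr (.inr c))
  invFun y := match y with
    | .inl a => .inl (.inl a)
    | .inr (.inl a) => .inl (.inr (.inl a))
    | .inr (.inr (.inl b)) => .inl (.inr (.inr b))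
    | .inr (.inr (.inr c)) => .inr c
  left_inv x := by rcases x with (a | (a | b)) | c <;> rfl
  right_inv y := by rcases y with a | (a | (b | c)) <;> rfl

/-!
Eliminating an interface pair `z` only composes transitions through `⟨z,1⟩` and `⟨z,2⟩`, which
belong to `T`. In `T ⊕ T'` every such transition moves the `T`-state and fixes the `T'`-state,
so all of the Kleene paths through `z` are paths of `T` tensored with the identity on `Q'`,
while no path can pass from a `T'`-interface to `⟨z,i⟩`. Hence each elimination step on
`T ⊕ T'` is the sum of the corresponding step on `T` with `T'`, and induction over the
eliminated interfaces gives the theorem.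
-/

section Relations

variable {Q Q' : Type*}

def tensorId (r : Q → Q → Prop) : Q × Q' → Q × Q' → Prop :=
  fun s t => r s.1 t.1 ∧ s.2 = t.2

lemma rcomp_tensorId (r r' : Q → Q → Prop) :
    rcomp (tensorId (Q' := Q') r) (tensorId r') = tensorId (rcomp r r') := by
  funext s t
  apply propext
  constructor
  · rintro ⟨m, ⟨hr, h⟩, hr', h'⟩
    exact ⟨⟨m.1, hr, hr'⟩, h.trans h'⟩
  · rintro ⟨⟨m, hr, hr'⟩, h⟩
    exact ⟨(m, s.2), ⟨hr, rfl⟩, hr', h⟩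

lemma runion_tensorId (r r' : Q → Q → Prop) :
    runion (tensorId (Q' := Q') r) (tensorId r') = tensorId (runion r r') := by
  funext s t
  apply propext
  simp only [runion, tensorId, or_and_right]

lemma altOne_tensorId (i j : Fin 2) :
    (altOne : Mat2 (Q × Q')) i j = tensorId (altOne i j) := by
  funext s t
  by_cases h : i = j <;> simp [altOne, tensorId, h, Prod.ext_iff]

lemma altPow_tensorId (U : Fin 2 → Fin 2 → Q → Q → Prop) (n : ℕ) :
    altPow (fun i j => tensorId (Q' := Q') (U i j)) n = fun i j => tensorId (altPow U n i j) := by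
  induction n with
  | zero => funext i j; exact altOne_tensorId i j
  | succ n ih =>
    funext i j
    simp only [altPow, altMul, ih, rcomp_tensorId, runion_tensorId]

end Relations

section Kleene

variable {Q X : Type*}

/-- The relation `⋃ₙ u ⊙ Uⁿ ⊙ v` of all paths through an eliminated interface pair. -/
def kleenePaths (u : Fin 2 → Q → Q → Prop) (U : Fin 2 → Fin 2 → Q → Q → Prop)
    (v : Fin 2 → Q → Q → Prop) : Q → Q → Prop :=
  fun q r => ∃ n, altRowCol (altRowMul u (altPow U n)) v q r

/-- `elimStep` at an arbitrary pair `p` of interfaces of an arbitrary sort. -/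
def kleeneAt (lam : Option X → Option X → Q → Q → Prop) (p : Fin 2 → Option X) :
    Option X → Option X → Q → Q → Prop :=
  fun x y => runion (lam x y)
    (kleenePaths (fun i => lam x (p i)) (fun i j => lam (p i) (p j)) (fun i => lam (p i) y))

lemma kleenePaths_tensorId {Q' : Type*} (u : Fin 2 → Q → Q → Prop)
    (U : Fin 2 → Fin 2 → Q → Q → Prop) (v : Fin 2 → Q → Q → Prop) :
    kleenePaths (fun i => tensorId (Q' := Q') (u i)) (fun i j => tensorId (U i j))
      (fun i => tensorId (v i)) = tensorId (kleenePaths u U v) := by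
  funext s t
  apply propext
  simp only [kleenePaths, altPow_tensorId, altRowMul, altRowCol, rcomp_tensorId,
    runion_tensorId, tensorId, exists_and_right]

lemma not_kleenePaths_of_left {u : Fin 2 → Q → Q → Prop} (U : Fin 2 → Fin 2 → Q → Q → Prop)
    (v : Fin 2 → Q → Q → Prop) (hu : ∀ i q r, ¬ u i q r) (q r : Q) :
    ¬ kleenePaths u U v q r := by
  rintro ⟨n, ⟨m, (⟨m', h, _⟩ | ⟨m', h, _⟩), _⟩ | ⟨m, (⟨m', h, _⟩ | ⟨m', h, _⟩), _⟩⟩ <;>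
    exact hu _ _ _ h

lemma not_kleenePaths_of_right (u : Fin 2 → Q → Q → Prop) (U : Fin 2 → Fin 2 → Q → Q → Prop)
    {v : Fin 2 → Q → Q → Prop} (hv : ∀ i q r, ¬ v i q r) (q r : Q) :
    ¬ kleenePaths u U v q r := by
  rintro ⟨n, ⟨m, _, h⟩ | ⟨m, _, h⟩⟩ <;> exact hv _ _ _ h

end Kleene

section Automata

variable {Q Q' X Y : Type*}

/-- The family `λ^∅` of an automaton of arbitrary sort. -/
def transFamily (δ : TRel Q X) : Option X → Option X → Q → Q → Prop :=
  fun x y q r => δ (q, x) (r, y)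

def ofFamily (lam : Option X → Option X → Q → Q → Prop) : TRel Q X :=
  fun a b => lam a.2 b.2 a.1 b.1

def restrict (f : X → Y) (δ : TRel Q Y) : TRel Q X :=
  fun a b => δ (a.1, a.2.map f) (b.1, b.2.map f)

lemma restrict_restrict {Z : Type*} (f : X → Y) (g : Y → Z) (δ : TRel Q Z) :
    restrict f (restrict g δ) = restrict (g ∘ f) δ := by
  funext a b
  simp only [restrict, Option.map_map]

lemma autSum_restrict {Z : Type*} (f : X → Y) (δ : TRel Q Y) (δ' : TRel Q' Z) :
    autSum (restrict f δ) δ' = restrict (Sum.map f id) (autSum δ δ') := by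
  funext ⟨s, u⟩ ⟨t, v⟩
  apply propext
  rcases u with _ | u | u <;> rcases v with _ | v | v <;>
    simp [autSum, restrict]

lemma autSum_map_inl_map_inl (δ : TRel Q X) (δ' : TRel Q' Y) (s t : Q × Q')
    (x y : Option X) :
    autSum δ δ' (s, x.map Sum.inl) (t, y.map Sum.inl) ↔
      tensorId (transFamily δ x y) s t ∨
        (x = none ∧ y = none ∧ s.1 = t.1 ∧ δ' (s.2, none) (t.2, none)) := by
  rcases x with _ | x <;> rcases y with _ | y <;>
    simp [autSum, transFamily, tensorId, and_comm]

lemma autSum_map_inl_map_inl_of_ne_none (δ : TRel Q X) (δ' : TRel Q' Y) {x y : Option X}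
    (h : x ≠ none ∨ y ≠ none) :
    transFamily (autSum δ δ') (x.map Sum.inl) (y.map Sum.inl) = tensorId (transFamily δ x y) := by
  funext s t
  apply propext
  rw [transFamily, autSum_map_inl_map_inl]
  rcases h with h | h <;> simp [h]

lemma not_autSum_some_inr_some_inl (δ : TRel Q X) (δ' : TRel Q' Y) (s t : Q × Q')
    (c : Y) (x : X) : ¬ autSum δ δ' (s, some (Sum.inr c)) (t, some (Sum.inl x)) := by
  simp [autSum]

lemma not_autSum_some_inl_some_inr (δ : TRel Q X) (δ' : TRel Q' Y) (s t : Q × Q')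
    (x : X) (c : Y) : ¬ autSum δ δ' (s, some (Sum.inl x)) (t, some (Sum.inr c)) := by
  simp [autSum]

lemma autSum_congr_left_of_inr (δ₁ δ₂ : TRel Q X) (δ' : TRel Q' Y) (s t : Q × Q')
    (u v : Option (X ⊕ Y)) (h : (∃ c, u = some (Sum.inr c)) ∨ ∃ c, v = some (Sum.inr c)) :
    autSum δ₁ δ' (s, u) (t, v) ↔ autSum δ₂ δ' (s, u) (t, v) := by
  rcases h with ⟨c, rfl⟩ | ⟨c, rfl⟩ <;> simp [autSum]

lemma exists_map_inl_or_eq_some_inr (w : Option (X ⊕ Y)) :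
    (∃ x : Option X, w = x.map Sum.inl) ∨ ∃ c, w = some (Sum.inr c) := by
  rcases w with _ | x | c
  exacts [Or.inl ⟨none, rfl⟩, Or.inl ⟨some x, rfl⟩, Or.inr ⟨c, rfl⟩]

lemma kleeneAt_autSum_map_inl_map_inl (δ : TRel Q X) (δ' : TRel Q' Y) (p : Fin 2 → X)
    (x y : Option X) :
    kleeneAt (transFamily (autSum δ δ')) (fun i => some (Sum.inl (p i)))
        (x.map Sum.inl) (y.map Sum.inl) =
      transFamily (autSum (ofFamily (kleeneAt (transFamily δ) (fun i => some (p i)))) δ')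
        (x.map Sum.inl) (y.map Sum.inl) := by
  have hu : (fun i => transFamily (autSum δ δ') (x.map Sum.inl) (some (Sum.inl (p i))))
      = fun i => tensorId (transFamily δ x (some (p i))) :=
    funext fun i => autSum_map_inl_map_inl_of_ne_none δ δ'
      (y := some (p i)) (Or.inr (Option.some_ne_none _))
  have hU : (fun i j => transFamily (autSum δ δ') (some (Sum.inl (p i))) (some (Sum.inl (p j))))
      = fun i j => tensorId (transFamily δ (some (p i)) (some (p j))) :=
    funext fun i => funext fun j => autSum_map_inl_map_inl_of_ne_none δ δ'
      (x := some (p i)) (y := some (p j)) (Or.inl (Option.some_ne_none _))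
  have hv : (fun i => transFamily (autSum δ δ') (some (Sum.inl (p i))) (y.map Sum.inl))
      = fun i => tensorId (transFamily δ (some (p i)) y) :=
    funext fun i => autSum_map_inl_map_inl_of_ne_none δ δ'
      (x := some (p i)) (Or.inl (Option.some_ne_none _))
  funext s t
  apply propext
  simp only [kleeneAt, hu, hU, hv]
  rw [kleenePaths_tensorId]
  change (autSum δ δ' (s, _) (t, _) ∨ _) ↔ autSum _ δ' (s, _) (t, _)
  rw [autSum_map_inl_map_inl, autSum_map_inl_map_inl]
  change _ ↔ tensorId (runion _ _) s t ∨ _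
  rw [← runion_tensorId]
  simp only [runion]
  tauto

theorem kleeneAt_autSum (δ : TRel Q X) (δ' : TRel Q' Y) (p : Fin 2 → X) :
    kleeneAt (transFamily (autSum δ δ')) (fun i => some (Sum.inl (p i))) =
      transFamily (autSum (ofFamily (kleeneAt (transFamily δ) (fun i => some (p i)))) δ') := by
  funext w w'
  rcases exists_map_inl_or_eq_some_inr w with ⟨x, rfl⟩ | ⟨c, rfl⟩
  · rcases exists_map_inl_or_eq_some_inr w' with ⟨y, rfl⟩ | ⟨c, rfl⟩
    · exact kleeneAt_autSum_map_inl_map_inl δ δ' p x y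
    · funext s t
      refine propext ((or_iff_left (not_kleenePaths_of_right _ _ ?_ s t)).trans
        (autSum_congr_left_of_inr _ _ δ' s t _ _ (Or.inr ⟨c, rfl⟩)))
      exact fun i s t => not_autSum_some_inl_some_inr δ δ' s t (p i) c
  · funext s t
    refine propext ((or_iff_left (not_kleenePaths_of_left _ _ ?_ s t)).trans
      (autSum_congr_left_of_inr _ _ δ' s t _ _ (Or.inl ⟨c, rfl⟩)))
    exact fun i s t => not_autSum_some_inr_some_inl δ δ' s t c (p i)

end Automata

theorem lamList_relabel_autSum {Q Q' A B C : Type*} (δ : TRel Q (A ⊕ A ⊕ B)) (δ' : TRel Q' C)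
    (L : List A) :
    lamList (relabel (assocPerm A B C) (autSum δ δ')) L =
      transFamily (relabel (assocPerm A B C) (autSum (ofFamily (lamList δ L)) δ')) := by
  induction L with
  | nil => rfl
  | cons z L ih =>
    have hpair : (fun i => (![some (Sum.inl z), some (Sum.inr (Sum.inl z))] i).map
        (assocPerm A B C).symm) =
        fun i => some (Sum.inl (![Sum.inl z, Sum.inr (Sum.inl z)] i)) := by
      funext i; fin_cases i <;> rfl
    have hpair' : (fun i => some (![Sum.inl z, Sum.inr (Sum.inl z)] i) :
        Fin 2 → Option (A ⊕ A ⊕ B)) = ![some (Sum.inl z), some (Sum.inr (Sum.inl z))] := by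
      funext i; fin_cases i <;> rfl
    funext x y
    have key := congrFun (congrFun (kleeneAt_autSum (ofFamily (lamList δ L)) δ'
      ![Sum.inl z, Sum.inr (Sum.inl z)]) (x.map (assocPerm A B C).symm))
      (y.map (assocPerm A B C).symm)
    rw [← hpair, hpair'] at key
    change elimStep _ z x y = _
    rw [ih]
    exact key

theorem superposing_general {Q Q' A B C : Type*} [Fintype A]
    (δ : TRel Q (A ⊕ A ⊕ B)) (δ' : TRel Q' C) :
    kappa (relabel (assocPerm A B C) (autSum δ δ')) = autSum (kappa δ) δ' := by
  set Λ := ofFamily (lamList δ Finset.univ.toList)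
  have hembed : (assocPerm A B C).symm ∘ (fun x : B ⊕ C => Sum.inr (Sum.inr x)) =
      Sum.map (fun x : B => (Sum.inr (Sum.inr x) : A ⊕ A ⊕ B)) id := by
    funext x; cases x <;> rfl
  calc kappa (relabel (assocPerm A B C) (autSum δ δ'))
      = restrict (fun x : B ⊕ C => Sum.inr (Sum.inr x))
          (ofFamily (lamList (relabel (assocPerm A B C) (autSum δ δ')) Finset.univ.toList)) := rfl
    _ = restrict (fun x : B ⊕ C => Sum.inr (Sum.inr x))
          (restrict (assocPerm A B C).symm (autSum Λ δ')) := by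
        rw [lamList_relabel_autSum]; rfl
    _ = restrict (Sum.map (fun x : B => Sum.inr (Sum.inr x)) id) (autSum Λ δ') := by
        rw [restrict_restrict, hembed]
    _ = autSum (kappa δ) δ' := (autSum_restrict _ Λ δ').symm

/-- Superposing (axiom I8) for Turing automata: for a Turing automaton `T` of sort
`A ⊕ A ⊕ B` (`A` finite) and a Turing automaton `T'` of sort `C`,
`κ_A(T ⊕ T') = (κ_A T) ⊕ T'`; both sides have state set `Q × Q'` and their transition
relations coincide. -/
theorem superposing {Q Q' A B C : Type*} [Nonempty Q] [Nonempty Q'] [Fintype A]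
    (δ : TRel Q (A ⊕ A ⊕ B)) (δ' : TRel Q' C) :
    kappa (relabel (assocPerm A B C) (autSum δ δ')) = autSum (kappa δ) δ' :=
  superposing_general δ δ'
end

section
/- For every finite set A, the trace κ_A(1_A) of the identity automaton 1_A is the Turing automaton of empty sort with a single state and empty transition relation (in particular, it has no transition from the anchor * to itself). Consequently, κ_A(1_A) = κ_B(1_B) for all finite sets A and B. -/
/-- The canonical bijection `A ⊕ A ≃ A ⊕ A ⊕ Empty` padding the sort with the empty sort. -/
def padEmpty (A : Type*) : A ⊕ A ≃ A ⊕ A ⊕ (Empty : Type) where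
  toFun x := match x with
    | .inl a => .inl a
    | .inr a => .inr (.inl a)
  invFun y := match y with
    | .inl a => .inl a
    | .inr (.inl a) => .inr a
    | .inr (.inr e) => e.elim
  left_inv x := by rcases x with a | a <;> rfl
  right_inv y := by rcases y with a | (a | e) <;> first | rfl | exact e.elim

/-!
For `1_A`, the relation `λ^∅_{x,y}` holds exactly when `{x, y} = {⟨z,1⟩, ⟨z,2⟩}` for some
`z ∈ A`, and no Kleene elimination step enlarges it. Indeed no interface is linked to itself,
so the matrix `U` of a step at `z` has empty diagonal, and so do all its alternating powers;
hence a term `u ⊙ Uⁿ ⊙ v` enters the `z`-loop through one copy of `z` and leaves through the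
other, i.e. it runs from `⟨z,2⟩` to `⟨z,1⟩` or back, which `λ^∅` already contains. So
`λ^A = λ^∅`, which never links the anchor to itself.
-/

lemma altPow_diag_false {Q : Type*} {U : Mat2 Q} (hU : ∀ i q r, ¬ U i i q r) (n : ℕ) :
    ∀ i q r, ¬ altPow U n i i q r := by
  induction n with
  | zero => intro i q r; simp [altPow, altOne]
  | succ n ih =>
    intro i q r h
    fin_cases i <;> rcases h with ⟨b, hP, hU'⟩ | ⟨b, hP, hU'⟩
    exacts [ih 0 q b hP, hU 0 b r hU', hU 1 b r hU', ih 1 q b hP]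

lemma altRowCol_altRowMul_of_diag_false {Q : Type*} {u v : Fin 2 → Q → Q → Prop} {M : Mat2 Q}
    (hM : ∀ i q r, ¬ M i i q r) {q r : Q} (h : altRowCol (altRowMul u M) v q r) :
    (∃ c b, u 0 q c ∧ M 1 0 c b ∧ v 1 b r) ∨ (∃ c b, u 1 q c ∧ M 0 1 c b ∧ v 0 b r) := by
  rcases h with ⟨b, ⟨c, hu, hMcb⟩ | ⟨c, hu, hMcb⟩, hv⟩ | ⟨b, ⟨c, hu, hMcb⟩ | ⟨c, hu, hMcb⟩, hv⟩
  · exact .inl ⟨c, b, hu, hMcb, hv⟩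
  · exact (hM 0 c b hMcb).elim
  · exact (hM 1 c b hMcb).elim
  · exact .inr ⟨c, b, hu, hMcb, hv⟩

section Identity

variable {A B : Type*}

def Linked (x y : Option (A ⊕ A ⊕ B)) : Prop :=
  ∃ z, (x = some (.inl z) ∧ y = some (.inr (.inl z))) ∨
    (x = some (.inr (.inl z)) ∧ y = some (.inl z))

def linkedFamily (Q : Type*) : LamFamily Q (A ⊕ A ⊕ B) := fun x y _ _ => Linked x y

lemma not_linked_self (x : Option (A ⊕ A ⊕ B)) : ¬ Linked x x := by
  rintro ⟨z, ⟨rfl, h⟩ | ⟨rfl, h⟩⟩ <;> simp at h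

lemma lamInit_relabel_padEmpty_idAut :
    lamInit (relabel (padEmpty A) (idAut A)) = linkedFamily PUnit := by
  funext x y q r
  simp [lamInit, relabel, idAut, linkedFamily, Linked, Option.map_eq_some_iff, padEmpty, exists_or]

lemma elimStep_linkedFamily {Q : Type*} (z : A) :
    elimStep (linkedFamily (B := B) Q) z = linkedFamily Q := by
  funext x y q r
  refine propext ⟨?_, .inl⟩
  rintro (h | ⟨n, h⟩)
  · exact h
  rcases altRowCol_altRowMul_of_diag_false (altPow_diag_false (fun i _ _ => not_linked_self _) n) h
    with ⟨_, _, hu, -, hv⟩ | ⟨_, _, hu, -, hv⟩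
  · have hx : x = some (.inr (.inl z)) := by simpa [linkedFamily, Linked] using hu
    have hy : y = some (.inl z) := by simpa [linkedFamily, Linked] using hv
    exact ⟨z, .inr ⟨hx, hy⟩⟩
  · have hx : x = some (.inl z) := by simpa [linkedFamily, Linked] using hu
    have hy : y = some (.inr (.inl z)) := by simpa [linkedFamily, Linked] using hv
    exact ⟨z, .inl ⟨hx, hy⟩⟩

lemma lamList_relabel_padEmpty_idAut (L : List A) :
    lamList (relabel (padEmpty A) (idAut A)) L = linkedFamily PUnit := by
  induction L with
  | nil => exact lamInit_relabel_padEmpty_idAut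
  | cons z L ih => rw [lamList, ih, elimStep_linkedFamily]

lemma not_kappa_relabel_padEmpty_idAut [Fintype A] (x y : PUnit × Option Empty) :
    ¬ kappa (relabel (padEmpty A) (idAut A)) x y := by
  obtain ⟨q, _ | ⟨⟨⟩⟩⟩ := x
  obtain ⟨r, _ | ⟨⟨⟩⟩⟩ := y
  simp only [kappa, lamList_relabel_padEmpty_idAut]
  exact not_linked_self none

end Identity

/-- The trace `κ_A(1_A)` of the identity automaton is the Turing automaton of empty sort
with a single state and empty transition relation (in particular with no transition from
the anchor to itself); consequently `κ_A(1_A) = κ_B(1_B)` for all finite sets `A`, `B`. -/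
theorem trace_of_identity {A B : Type*} [Fintype A] [Fintype B] :
    (∀ x y, ¬ kappa (relabel (padEmpty A) (idAut A)) x y) ∧
    kappa (relabel (padEmpty A) (idAut A)) = kappa (relabel (padEmpty B) (idAut B)) :=
  ⟨not_kappa_relabel_padEmpty_idAut, funext fun x => funext fun y =>
    propext (iff_of_false (not_kappa_relabel_padEmpty_idAut x y)
      (not_kappa_relabel_padEmpty_idAut x y))⟩
end

section
/- Let A be a finite set, B and C sets, T = (Q, δ) a Turing automaton of sort A ⊕ A ⊕ B, and ρ : B → C a bijection. Then κ_A(T · (id_{A⊕A} ⊕ ρ)) = (κ_A T) · ρ as Turing automata of sort C: both have state set Q and their transition relations coincide. (Naturality of trace under relabeling, axiom I2, for Turing automata.) -/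
/-! A Kleene elimination step at `z ∈ A` only inspects the interfaces `⟨z,1⟩` and `⟨z,2⟩`,
which a relabeling of the form `1_{A⊕A} ⊕ ρ` fixes; so relabeling commutes with every step,
and hence with the whole elimination. -/

lemma elimStep_reindex {Q A B C : Type*} (lam : LamFamily Q (A ⊕ A ⊕ B))
    (f : Option (A ⊕ A ⊕ C) → Option (A ⊕ A ⊕ B)) (z : A)
    (hf₁ : f (some (Sum.inl z)) = some (Sum.inl z))
    (hf₂ : f (some (Sum.inr (Sum.inl z))) = some (Sum.inr (Sum.inl z)))
    (x y : Option (A ⊕ A ⊕ C)) :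
    elimStep (fun a b => lam (f a) (f b)) z x y = elimStep lam z (f x) (f y) := by
  have hf : ∀ i : Fin 2,
      f ((![some (Sum.inl z), some (Sum.inr (Sum.inl z))] : Fin 2 → Option (A ⊕ A ⊕ C)) i) =
        (![some (Sum.inl z), some (Sum.inr (Sum.inl z))] : Fin 2 → Option (A ⊕ A ⊕ B)) i :=
    Fin.forall_fin_two.2 ⟨hf₁, hf₂⟩
  simp only [elimStep, hf]

lemma lamList_relabel {Q A B C : Type*} (δ : TRel Q (A ⊕ A ⊕ B)) (e : A ⊕ A ⊕ B ≃ A ⊕ A ⊕ C)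
    (he₁ : ∀ a, e.symm (Sum.inl a) = Sum.inl a)
    (he₂ : ∀ a, e.symm (Sum.inr (Sum.inl a)) = Sum.inr (Sum.inl a)) (L : List A)
    (x y : Option (A ⊕ A ⊕ C)) :
    lamList (relabel e δ) L x y = lamList δ L (x.map e.symm) (y.map e.symm) := by
  induction L generalizing x y with
  | nil => rfl
  | cons z L ih =>
    change elimStep _ z x y = elimStep _ z _ _
    rw [show lamList (relabel e δ) L = fun x y => lamList δ L (x.map e.symm) (y.map e.symm) from
      funext₂ ih]
    exact elimStep_reindex _ _ z (congrArg some (he₁ z)) (congrArg some (he₂ z)) x y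

theorem trace_naturality_general {Q A B C : Type*} [Fintype A]
    (δ : TRel Q (A ⊕ A ⊕ B)) (ρ : B ≃ C) :
    kappa (relabel ((Equiv.refl A).sumCongr ((Equiv.refl A).sumCongr ρ)) δ) =
      relabel ρ (kappa δ) := by
  funext ⟨q, b⟩ ⟨r, c⟩
  change lamList _ _ _ _ q r = lamList δ _ _ _ q r
  rw [lamList_relabel δ _ (fun _ => rfl) (fun _ => rfl)]
  cases b <;> cases c <;> rfl

/-- Naturality of the trace under relabeling (axiom I2) for Turing automata: for a Turing
automaton `T` of sort `A ⊕ A ⊕ B` (`A` finite) and a bijection `ρ : B ≃ C`,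
`κ_A(T · (1_{A⊕A} ⊕ ρ)) = (κ_A T) · ρ`; both sides have state set `Q` and their transition
relations coincide. -/
theorem trace_naturality {Q A B C : Type*} [Nonempty Q] [Fintype A]
    (δ : TRel Q (A ⊕ A ⊕ B)) (ρ : B ≃ C) :
    kappa (relabel ((Equiv.refl A).sumCongr ((Equiv.refl A).sumCongr ρ)) δ) =
      relabel ρ (kappa δ) :=
  trace_naturality_general δ ρ
end
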